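/- Let E be a topological graph, Y a closed subset of E^0_rg, and E_Y = (E_Y^0, E_Y^1, d_Y, r_Y) the associated topological graph. Then (E_Y^0)_fin = E^0_fin ∪ ω(Y), (E_Y^0)_sce = E^0_sce ∪ ω(Y), and (E_Y^0)_rg = E^0_rg, where the left-hand sides are computed in the topological graph E_Y. -/

import Mathlib

open Set Filter OnePoint

namespace TopGraphAux

/-- `E⁰_sce`: the open set of sources of a topological graph. -/
def graphSce {E0 E1 : Type*} [TopologicalSpace E0] (r : E1 → E0) : Set E0 :=
  (closure (Set.range r))ᶜ

/-- `E⁰_fin`: vertices having a neighborhood whose `r`-preimage is compact. -/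
def graphFin {E0 E1 : Type*} [TopologicalSpace E0] [TopologicalSpace E1] (r : E1 → E0) :
    Set E0 :=
  {v | ∃ V ∈ nhds v, IsCompact (r ⁻¹' V)}

/-- `E⁰_rg`: the open set of regular vertices of a topological graph. -/
def graphRg {E0 E1 : Type*} [TopologicalSpace E0] [TopologicalSpace E1] (r : E1 → E0) :
    Set E0 :=
  graphFin r \ closure (graphSce r)

/-- A factor map from the topological graph `F = (F0, F1, dF, rF)` to the topological graph
`E = (E0, E1, dE, rE)`: a pair of continuous maps between one-point compactifications sending
`∞` to `∞`, intertwining range and domain maps, and with the unique edge-lifting property. -/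
structure IsFactorMap {E0 E1 F0 F1 : Type*}
    [TopologicalSpace E0] [TopologicalSpace E1] [TopologicalSpace F0] [TopologicalSpace F1]
    (dE rE : E1 → E0) (dF rF : F1 → F0)
    (m0 : OnePoint F0 → OnePoint E0) (m1 : OnePoint F1 → OnePoint E1) : Prop where
  continuous_m0 : Continuous m0
  continuous_m1 : Continuous m1
  map_infty0 : m0 ∞ = ∞
  map_infty1 : m1 ∞ = ∞
  compat : ∀ (e : F1) (e' : E1), m1 ↑e = ↑e' →
    (↑(rE e') : OnePoint E0) = m0 ↑(rF e) ∧ (↑(dE e') : OnePoint E0) = m0 ↑(dF e)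
  lift : ∀ (e' : E1) (v : F0), (↑(dE e') : OnePoint E0) = m0 ↑v →
    ∃! e : F1, m1 ↑e = (↑e' : OnePoint E1) ∧ dF e = v

/-- Regularity of a factor map: every vertex mapping to a regular vertex receives an edge,
and all edges it receives are mapped to genuine edges. -/
def IsRegularFactorMap {E0 E1 F0 F1 : Type*}
    [TopologicalSpace E0] [TopologicalSpace E1] [TopologicalSpace F0] [TopologicalSpace F1]
    (rE : E1 → E0) (rF : F1 → F0)
    (m0 : OnePoint F0 → OnePoint E0) (m1 : OnePoint F1 → OnePoint E1) : Prop :=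
  ∀ (v : F0) (w : E0), m0 ↑v = ↑w → w ∈ graphRg rE →
    (∃ e : F1, rF e = v) ∧ ∀ e : F1, rF e = v → ∃ e' : E1, m1 ↑e = ↑e'

/-- `f` restricts to a homeomorphism from `U` onto `V`. -/
def IsHomeoOn {X Y : Type*} [TopologicalSpace X] [TopologicalSpace Y]
    (f : X → Y) (U : Set X) (V : Set Y) : Prop :=
  ∃ h : U ≃ₜ V, ∀ x : U, (h x : Y) = f (x : X)

/-- Extension of a map `A → OnePoint B` to the one-point compactification, sending `∞` to `∞`. -/
def onePointLift {A B : Type*} (f : A → OnePoint B) : OnePoint A → OnePoint B :=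
  fun x => Option.elim x ∞ f

/-- The relation identifying the copy in `S` of each point of `B ⊆ S` with the corresponding
point of `X`. -/
def glueRel {X : Type*} (S B : Set X) : (X ⊕ ↥S) → (X ⊕ ↥S) → Prop :=
  fun a b => ∃ x : ↥S, (x : X) ∈ B ∧
    ((a = Sum.inl ↑x ∧ b = Sum.inr x) ∨ (a = Sum.inr x ∧ b = Sum.inl ↑x))

/-- The space `X ⨿_B S` obtained from `X ⊔ S` by identifying the two copies of each point
of `B ⊆ S ⊆ X`. -/
def Glue (X : Type*) (S B : Set X) : Type _ := Quot (glueRel S B)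

instance {X : Type*} [TopologicalSpace X] (S B : Set X) : TopologicalSpace (Glue X S B) :=
  inferInstanceAs (TopologicalSpace (Quot _))

/-- The canonical inclusion `X → X ⨿_B S`. -/
def Glue.inl {X : Type*} {S B : Set X} (x : X) : Glue X S B := Quot.mk _ (Sum.inl x)

/-- The inclusion of the extra copy `S → X ⨿_B S`. -/
def Glue.inr {X : Type*} {S B : Set X} (x : ↥S) : Glue X S B := Quot.mk _ (Sum.inr x)

/-- The extension `d_Y` of the domain map `d` to the graph `E_Y`. -/
def glueD {E0 E1 : Type*} [TopologicalSpace E0] (d : E1 → E0) (Y : Set E0) :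
    Glue E1 (d ⁻¹' closure Y) (d ⁻¹' (closure Y \ Y)) → Glue E0 (closure Y) (closure Y \ Y) :=
  Quot.lift
    (Sum.elim (fun e => Glue.inl (d e)) (fun e => Glue.inr ⟨d e.1, e.2⟩))
    (by
      rintro a b ⟨x, hx, (⟨rfl, rfl⟩ | ⟨rfl, rfl⟩)⟩
      · exact Quot.sound ⟨⟨d x.1, x.2⟩, hx, Or.inl ⟨rfl, rfl⟩⟩
      · exact (Quot.sound ⟨⟨d x.1, x.2⟩, hx, Or.inl ⟨rfl, rfl⟩⟩).symm)

/-- The extension `r_Y` of the range map `r` to the graph `E_Y`. -/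
def glueR {E0 E1 : Type*} [TopologicalSpace E0] (d r : E1 → E0) (Y : Set E0) :
    Glue E1 (d ⁻¹' closure Y) (d ⁻¹' (closure Y \ Y)) → Glue E0 (closure Y) (closure Y \ Y) :=
  Quot.lift (Sum.elim (fun e => Glue.inl (r e)) (fun e => Glue.inl (r e.1)))
    (by rintro a b ⟨x, hx, (⟨rfl, rfl⟩ | ⟨rfl, rfl⟩)⟩ <;> rfl)

/-- The projection from the glued space back onto the original space. -/
def glueProj {X : Type*} (S B : Set X) : Glue X S B → X :=
  Quot.lift (Sum.elim id Subtype.val)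
    (by rintro a b ⟨x, hx, (⟨rfl, rfl⟩ | ⟨rfl, rfl⟩)⟩ <;> rfl)

/-- A point of the projective limit `E^i = Ẽ^i \ {∞}`: a compatible thread of points of the
one-point compactifications, not all equal to `∞`. -/
structure LimPt {Λ : Type*} [Preorder Λ] (X : Λ → Type*)
    (m : ∀ ⦃l l' : Λ⦄, l ≤ l' → OnePoint (X l') → OnePoint (X l)) where
  pt : ∀ l, OnePoint (X l)
  compat : ∀ ⦃l l' : Λ⦄ (h : l ≤ l'), m h (pt l') = pt l
  exists_ne_infty : ∃ l, pt l ≠ ∞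

instance {Λ : Type*} [Preorder Λ] (X : Λ → Type*) [∀ l, TopologicalSpace (X l)]
    (m : ∀ ⦃l l' : Λ⦄, l ≤ l' → OnePoint (X l') → OnePoint (X l)) :
    TopologicalSpace (LimPt X m) :=
  TopologicalSpace.induced LimPt.pt inferInstance

/-- Topological freeness: the set of base points of loops without entrances has empty
interior. -/
def IsTopologicallyFree {E0 E1 : Type*} [TopologicalSpace E0] (d r : E1 → E0) : Prop :=
  interior {v : E0 | ∃ (n : ℕ) (hn : 0 < n) (e : Fin n → E1),
      (∀ k : Fin n, d (e k) = r (e ⟨(k.1 + 1) % n, Nat.mod_lt _ hn⟩)) ∧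
      (∀ (k : Fin n) (e' : E1), r e' = r (e k) → e' = e k) ∧
      r (e ⟨0, hn⟩) = v} = ∅

open scoped Classical in
/-- Partial iteration of a partially defined map `σ` with domain `W`:
`sgdsIter σ n x = some y` iff `x ∈ dom (σ^n)` and `σ^n x = y`. -/
noncomputable def sgdsIter {X : Type*} {W : Set X} (σ : ↥W → X) : ℕ → X → Option X
  | 0, x => Option.some x
  | n + 1, x => if h : x ∈ W then sgdsIter σ n (σ ⟨x, h⟩) else none

/-! The range map of `E_Y` factors as `r_Y = inl ∘ r ∘ proj`, where `proj : E_Y¹ → E¹` forgets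
the gluing. Since `proj` is proper and has the closed embedding `inl : E¹ → E_Y¹` as a section,
compactness of `r`-preimages transfers in both directions, so `(E_Y⁰)_fin ∩ E⁰ = E⁰_fin`. The
extra copy `ω(Y)` is never hit by `r_Y` and is separated from `E⁰` because the gluing locus
`closure Y \ Y = closure Y \ E⁰_rg` is closed; hence `ω(Y)` consists of sources. Finally, regular
vertices of `E` avoid `closure Y \ Y`, hence the closure of `ω(Y)`, so regularity is unchanged. -/

namespace Glue

variable {X : Type*} {S B : Set X}

lemma inl_or_inr_notMem (z : Glue X S B) :
    (∃ x, z = Glue.inl x) ∨ ∃ s : ↥S, s.1 ∉ B ∧ z = Glue.inr s := by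
  induction z using Quot.ind with
  | _ w =>
    rcases w with x | s
    · exact Or.inl ⟨x, rfl⟩
    · by_cases hs : s.1 ∈ B
      · exact Or.inl ⟨s.1, Quot.sound ⟨s, hs, Or.inr ⟨rfl, rfl⟩⟩⟩
      · exact Or.inr ⟨s, hs, rfl⟩

@[simp]
lemma proj_inl (x : X) : glueProj S B (Glue.inl x) = x := rfl

lemma inl_injective : Function.Injective (Glue.inl : X → Glue X S B) :=
  Function.LeftInverse.injective proj_inl

lemma inl_eq_inr_iff {x : X} {s : ↥S} :
    (Glue.inl x : Glue X S B) = Glue.inr s ↔ x = s.1 ∧ s.1 ∈ B := by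
  refine ⟨fun h => ⟨congrArg (glueProj S B) h, ?_⟩, ?_⟩
  · -- `inr s` lies in the class of a point of `X` exactly when `s ∈ B`
    have hB := congrArg (Quot.lift (Sum.elim (fun _ => True) (fun t : ↥S => t.1 ∈ B))
      (by rintro a b ⟨t, ht, (⟨rfl, rfl⟩ | ⟨rfl, rfl⟩)⟩ <;> simp [ht])) h
    exact cast hB trivial
  · rintro ⟨rfl, hs⟩
    exact Quot.sound ⟨s, hs, Or.inl ⟨rfl, rfl⟩⟩

lemma inr_mem_image_inl_iff {s : ↥S} {A : Set X} :
    (Glue.inr s : Glue X S B) ∈ Glue.inl '' A ↔ s.1 ∈ A ∧ s.1 ∈ B := by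
  refine ⟨fun ⟨x, hx, h⟩ => ?_, fun ⟨hA, hB⟩ => ⟨s.1, hA, inl_eq_inr_iff.mpr ⟨rfl, hB⟩⟩⟩
  obtain ⟨rfl, hB⟩ := inl_eq_inr_iff.mp h
  exact ⟨hx, hB⟩

lemma inl_mem_range_inr_iff {x : X} :
    (Glue.inl x : Glue X S B) ∈ range Glue.inr ↔ x ∈ S ∧ x ∈ B := by
  refine ⟨fun ⟨s, h⟩ => ?_, fun ⟨hS, hB⟩ => ⟨⟨x, hS⟩, (inl_eq_inr_iff.mpr ⟨rfl, hB⟩).symm⟩⟩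
  obtain ⟨rfl, hB⟩ := inl_eq_inr_iff.mp h.symm
  exact ⟨s.2, hB⟩

lemma compl_image_inl (A : Set X) :
    (Glue.inl '' A : Set (Glue X S B))ᶜ = Glue.inl '' Aᶜ ∪ Glue.inr '' {s | s.1 ∉ B} := by
  ext z
  rcases inl_or_inr_notMem z with ⟨x, rfl⟩ | ⟨s, hs, rfl⟩
  · simp only [mem_compl_iff, mem_union, inl_injective.mem_set_image, iff_self_or]
    rintro ⟨s, hs, h⟩
    exact absurd (inl_eq_inr_iff.mp h.symm).2 hs
  · exact iff_of_true (fun h => hs (inr_mem_image_inl_iff.mp h).2) (Or.inr ⟨s, hs, rfl⟩)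

variable [TopologicalSpace X]

lemma continuous_inl : Continuous (Glue.inl : X → Glue X S B) :=
  continuous_quot_mk.comp _root_.continuous_inl

lemma continuous_inr : Continuous (Glue.inr : ↥S → Glue X S B) :=
  continuous_quot_mk.comp _root_.continuous_inr

lemma continuous_proj : Continuous (glueProj S B) :=
  continuous_quot_lift _ (continuous_id.sumElim continuous_subtype_val)

lemma isClosedEmbedding_inl (hB : IsClosed B) :
    Topology.IsClosedEmbedding (Glue.inl : X → Glue X S B) := by
  refine .of_continuous_injective_isClosedMap continuous_inl inl_injective fun C hC => ?_
  refine isQuotientMap_quot_mk.isClosed_preimage.mp (isClosed_sum_iff.mpr ⟨?_, ?_⟩)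
  · convert hC using 1
    ext x
    exact inl_injective.mem_set_image
  · convert (hC.inter hB).preimage continuous_subtype_val using 1
    ext s
    exact inr_mem_image_inl_iff

lemma isClosed_range_inr (hS : IsClosed S) (hB : IsClosed B) :
    IsClosed (range (Glue.inr : ↥S → Glue X S B)) := by
  refine isQuotientMap_quot_mk.isClosed_preimage.mp (isClosed_sum_iff.mpr ⟨?_, ?_⟩)
  · convert hS.inter hB using 1
    ext x
    exact inl_mem_range_inr_iff
  · convert isClosed_univ using 1
    exact eq_univ_of_forall fun s => mem_range_self s

lemma isCompact_preimage_proj (hS : IsClosed S) {K : Set X} (hK : IsCompact K) :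
    IsCompact (glueProj S B ⁻¹' K) := by
  have hK' : glueProj S B ⁻¹' K = Glue.inl '' K ∪ Glue.inr '' (Subtype.val ⁻¹' K) := by
    refine Subset.antisymm (fun z hz => ?_) (union_subset ?_ ?_)
    · induction z using Quot.ind with
      | _ w =>
        rcases w with x | s
        · exact Or.inl ⟨x, hz, rfl⟩
        · exact Or.inr ⟨s, hz, rfl⟩
    · rintro _ ⟨x, hx, rfl⟩; exact hx
    · rintro _ ⟨s, hs, rfl⟩; exact hs
  rw [hK']
  exact (hK.image continuous_inl).union
    ((hS.isClosedEmbedding_subtypeVal.isCompact_preimage hK).image continuous_inr)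

end Glue

section GraphVertexSets

variable {E0 E1 : Type*} [TopologicalSpace E0]

lemma graphSce_eq_compl_image {F0 F1 : Type*} [TopologicalSpace F0] {r : E1 → E0}
    {ρ : F1 → F0} {ι : E0 → F0} (hι : Topology.IsClosedEmbedding ι)
    (h : range ρ = ι '' range r) : graphSce ρ = (ι '' closure (range r))ᶜ := by
  rw [graphSce, h, hι.closure_image_eq]

variable [TopologicalSpace E1]

lemma isOpen_graphFin (r : E1 → E0) : IsOpen (graphFin r) :=
  isOpen_iff_mem_nhds.mpr fun _ ⟨V, hV, hc⟩ =>
    mem_of_superset (eventually_eventually_nhds.mpr hV) fun _ hw => ⟨V, hw, hc⟩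

lemma isOpen_graphRg (r : E1 → E0) : IsOpen (graphRg r) :=
  (isOpen_graphFin r).sdiff isClosed_closure

lemma graphSce_subset_graphFin (r : E1 → E0) : graphSce r ⊆ graphFin r := fun v hv =>
  ⟨graphSce r, isClosed_closure.isOpen_compl.mem_nhds hv, by
    rw [show r ⁻¹' graphSce r = ∅ from
      eq_empty_of_forall_notMem fun e he => he (subset_closure (mem_range_self e))]
    exact isCompact_empty⟩

variable {F0 F1 : Type*} [TopologicalSpace F0] [TopologicalSpace F1]
  {r : E1 → E0} {ρ : F1 → F0} {ι : E0 → F0}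

lemma preimage_graphFin_subset (hι : Continuous ι) {σ : E1 → F1}
    (hσ : Topology.IsClosedEmbedding σ) (h : ∀ e, ρ (σ e) = ι (r e)) :
    ι ⁻¹' graphFin ρ ⊆ graphFin r := fun _ ⟨V, hV, hc⟩ =>
  ⟨ι ⁻¹' V, hι.continuousAt.preimage_mem_nhds hV, by
    simpa only [preimage_preimage, h] using hσ.isCompact_preimage hc⟩

lemma image_graphFin_subset {p : F0 → E0} (hp : Continuous p) (hpι : ∀ x, p (ι x) = x)
    {π : F1 → E1} (hπ : ∀ K, IsCompact K → IsCompact (π ⁻¹' K))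
    (h : ∀ z, p (ρ z) = r (π z)) :
    ι '' graphFin r ⊆ graphFin ρ := by
  rintro _ ⟨x, ⟨U, hU, hc⟩, rfl⟩
  refine ⟨p ⁻¹' U, hp.continuousAt.preimage_mem_nhds (by rwa [hpι]), ?_⟩
  simpa only [preimage_preimage, h] using hπ _ hc

end GraphVertexSets

section GluedGraph

variable {E0 E1 : Type*} [TopologicalSpace E0] {d : E1 → E0} (r : E1 → E0) {Y : Set E0}

lemma glueR_eq_inl_proj (z : Glue E1 (d ⁻¹' closure Y) (d ⁻¹' (closure Y \ Y))) :
    glueR d r Y z = Glue.inl (r (glueProj _ _ z)) := by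
  induction z using Quot.ind with
  | _ w => rcases w with e | e <;> rfl

lemma range_glueR : range (glueR d r Y) = Glue.inl '' range r := by
  refine Subset.antisymm ?_ ?_
  · rintro _ ⟨z, rfl⟩
    exact ⟨_, mem_range_self _, (glueR_eq_inl_proj r z).symm⟩
  · rintro _ ⟨_, ⟨e, rfl⟩, rfl⟩
    exact ⟨Glue.inl e, rfl⟩

lemma range_glue_inr_eq_image :
    range (fun v : ↥Y =>
      (Glue.inr ⟨v.1, subset_closure v.2⟩ : Glue E0 (closure Y) (closure Y \ Y))) =
      Glue.inr '' {s | s.1 ∉ closure Y \ Y} := by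
  ext z
  constructor
  · rintro ⟨v, rfl⟩
    exact ⟨_, fun h => h.2 v.2, rfl⟩
  · rintro ⟨s, hs, rfl⟩
    exact ⟨⟨s.1, not_not.mp fun h => hs ⟨s.2, h⟩⟩, rfl⟩

variable (hB : IsClosed (closure Y \ Y))
include hB

lemma graphSce_glueR :
    graphSce (glueR d r Y) =
      Glue.inl '' graphSce r ∪ Glue.inr '' {s | s.1 ∉ closure Y \ Y} := by
  rw [graphSce_eq_compl_image (Glue.isClosedEmbedding_inl hB) (range_glueR r),
    Glue.compl_image_inl, graphSce]

variable [TopologicalSpace E1]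

lemma graphFin_glueR (hd : Continuous d) :
    graphFin (glueR d r Y) =
      Glue.inl '' graphFin r ∪ Glue.inr '' {s | s.1 ∉ closure Y \ Y} := by
  refine Subset.antisymm (fun z hz => ?_) (union_subset ?_ ?_)
  · rcases Glue.inl_or_inr_notMem z with ⟨x, rfl⟩ | ⟨s, hs, rfl⟩
    · exact Or.inl ⟨x, preimage_graphFin_subset (ρ := glueR d r Y) Glue.continuous_inl
        (Glue.isClosedEmbedding_inl (hB.preimage hd)) (fun _ => rfl) hz, rfl⟩
    · exact Or.inr ⟨s, hs, rfl⟩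
  · exact image_graphFin_subset Glue.continuous_proj Glue.proj_inl
      (fun _ => Glue.isCompact_preimage_proj (isClosed_closure.preimage hd))
      (fun z => by rw [glueR_eq_inl_proj, Glue.proj_inl])
  · exact subset_union_right.trans ((graphSce_glueR r hB).symm.subset.trans
      (graphSce_subset_graphFin _))

lemma graphRg_glueR (hd : Continuous d) (hBr : Disjoint (closure Y \ Y) (graphRg r)) :
    graphRg (glueR d r Y) = Glue.inl '' graphRg r := by
  have hSce := graphSce_glueR (d := d) r hB
  ext z
  rw [graphRg, graphFin_glueR r hB hd]
  constructor
  · rintro ⟨⟨x, hx, rfl⟩ | ⟨s, hs, rfl⟩, hz⟩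
    · refine ⟨x, ⟨hx, fun hc => hz ?_⟩, rfl⟩
      rw [hSce]
      exact closure_mono subset_union_left
        (image_closure_subset_closure_image Glue.continuous_inl ⟨x, hc, rfl⟩)
    · exact absurd (subset_closure (hSce ▸ Or.inr ⟨s, hs, rfl⟩)) hz
  · rintro ⟨x, hx, rfl⟩
    refine ⟨Or.inl ⟨x, hx.1, rfl⟩, fun hc => ?_⟩
    have hSce_sub : closure (graphSce (glueR d r Y)) ⊆
        Glue.inl '' closure (graphSce r) ∪ range Glue.inr := by
      refine closure_minimal ?_ (((Glue.isClosedEmbedding_inl hB).isClosedMap _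
        isClosed_closure).union (Glue.isClosed_range_inr isClosed_closure hB))
      rw [hSce]
      exact union_subset_union (image_mono subset_closure) (image_subset_range _ _)
    rcases hSce_sub hc with h | h
    · exact hx.2 (Glue.inl_injective.mem_set_image.mp h)
    · exact disjoint_left.mp hBr (Glue.inl_mem_range_inr_iff.mp h).2 hx

end GluedGraph

theorem statement5_general
    {E0 E1 : Type*} [TopologicalSpace E0] [TopologicalSpace E1]
    (d r : E1 → E0) (hd : IsLocalHomeomorph d)
    (Y : Set E0) (hYc : closure Y ∩ graphRg r = Y) :
    graphFin (glueR d r Y) =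
        (Glue.inl : E0 → Glue E0 (closure Y) (closure Y \ Y)) '' graphFin r ∪
          Set.range (fun v : ↥Y =>
            (Glue.inr ⟨v.1, subset_closure v.2⟩ : Glue E0 (closure Y) (closure Y \ Y))) ∧
      graphSce (glueR d r Y) =
        (Glue.inl : E0 → Glue E0 (closure Y) (closure Y \ Y)) '' graphSce r ∪
          Set.range (fun v : ↥Y =>
            (Glue.inr ⟨v.1, subset_closure v.2⟩ : Glue E0 (closure Y) (closure Y \ Y))) ∧
      graphRg (glueR d r Y) =
        (Glue.inl : E0 → Glue E0 (closure Y) (closure Y \ Y)) '' graphRg r := by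
  have hB : closure Y \ Y = closure Y \ graphRg r := by
    nth_rewrite 2 [← hYc]
    exact sdiff_self_inter
  have hBc : IsClosed (closure Y \ Y) := hB ▸ isClosed_closure.sdiff (isOpen_graphRg r)
  have hBr : Disjoint (closure Y \ Y) (graphRg r) := hB ▸ disjoint_sdiff_left
  rw [range_glue_inr_eq_image]
  exact ⟨graphFin_glueR r hBc hd.continuous, graphSce_glueR r hBc,
    graphRg_glueR r hBc hd.continuous hBr⟩

/-- For a topological graph `E` and a closed subset `Y` of `E⁰_rg`,
the graph `E_Y` satisfies `(E_Y⁰)_fin = E⁰_fin ∪ ω(Y)`, `(E_Y⁰)_sce = E⁰_sce ∪ ω(Y)`,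
and `(E_Y⁰)_rg = E⁰_rg`. -/
theorem statement5
    {E0 E1 : Type*} [TopologicalSpace E0] [TopologicalSpace E1]
    [T2Space E0] [T2Space E1] [LocallyCompactSpace E0] [LocallyCompactSpace E1]
    (d r : E1 → E0) (hd : IsLocalHomeomorph d) (hr : Continuous r)
    (Y : Set E0) (hY : Y ⊆ graphRg r) (hYc : closure Y ∩ graphRg r = Y) :
    graphFin (glueR d r Y) =
        (Glue.inl : E0 → Glue E0 (closure Y) (closure Y \ Y)) '' graphFin r ∪
          Set.range (fun v : ↥Y =>
            (Glue.inr ⟨v.1, subset_closure v.2⟩ : Glue E0 (closure Y) (closure Y \ Y))) ∧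
      graphSce (glueR d r Y) =
        (Glue.inl : E0 → Glue E0 (closure Y) (closure Y \ Y)) '' graphSce r ∪
          Set.range (fun v : ↥Y =>
            (Glue.inr ⟨v.1, subset_closure v.2⟩ : Glue E0 (closure Y) (closure Y \ Y))) ∧
      graphRg (glueR d r Y) =
        (Glue.inl : E0 → Glue E0 (closure Y) (closure Y \ Y)) '' graphRg r :=
  statement5_general d r hd Y hYc

end TopGraphAux
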